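/- arXiv:1810.10636 — 5 statements merged into one kernel-verified Lean document; each statement's English description precedes it below -/
import Mathlib

section
/- Let T be a type of system behaviors, let ι be a finite index set, and for each i ∈ ι let Σᵢ ⊆ T and Aeᵢ ⊆ T be sets of behaviors, let Pᵢ and Qᵢ be parameter types, let Afᵢ : Pᵢ → Set T and Gᵢ : Qᵢ → Set T be parameterized families of behavior sets, let λᵢ : Pᵢ → Qᵢ, and let Γ : (Π j, Q j) → (Π j, P j). Assume: (1) for every i and every pᵢ ∈ Pᵢ, Σᵢ ∩ Aeᵢ ∩ Afᵢ(pᵢ) ⊆ Gᵢ(λᵢ(pᵢ)) (each subsystem satisfies its parameterized subcontract); (2) for every i and every q ∈ Π j, Q j, the joint guarantee ⋂ⱼ Gⱼ(q j) ⊆ Afᵢ((Γ q) i) (the guarantees imply the feedback assumptions). Let x ∈ T satisfy x ∈ Σᵢ ∩ Aeᵢ for all i, and suppose there is p⁰ ∈ Π j, P j with x ∈ Afᵢ(p⁰ i) for all i. Define recursively p[0] = p⁰, q[k] i = λᵢ(p[k] i), and p[k+1] = Γ(q[k]). Then for every k ∈ ℕ and every i ∈ ι, x ∈ Gᵢ(q[k]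 i). -/
/-- Theorem 1 (assume-guarantee reasoning for network systems), semantic form. -/
theorem assume_guarantee_network
    {T ι : Type*} [Fintype ι]
    (Sys Ae : ι → Set T)
    (P Q : ι → Type*)
    (Af : ∀ i, P i → Set T) (G : ∀ i, Q i → Set T)
    (lam : ∀ i, P i → Q i)
    (Γ : (∀ j, Q j) → (∀ j, P j))
    (h1 : ∀ i (p : P i), Sys i ∩ Ae i ∩ Af i p ⊆ G i (lam i p))
    (h2 : ∀ i (q : ∀ j, Q j), (⋂ j, G j (q j)) ⊆ Af i (Γ q i))
    (x : T) (hx : ∀ i, x ∈ Sys i ∩ Ae i)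
    (p0 : ∀ j, P j) (hp0 : ∀ i, x ∈ Af i (p0 i))
    (p : ℕ → ∀ j, P j) (q : ℕ → ∀ j, Q j)
    (hpzero : p 0 = p0)
    (hq : ∀ k i, q k i = lam i (p k i))
    (hpsucc : ∀ k, p (k + 1) = Γ (q k)) :
    ∀ (k : ℕ) (i : ι), x ∈ G i (q k i) := by
  have key : ∀ k i, x ∈ Af i (p k i) := by
    intro k
    induction k with
    | zero => intro i; rw [hpzero]; exact hp0 i
    | succ n ih =>
      intro i
      rw [hpsucc]
      apply h2 i (q n)
      exact Set.mem_iInter.2 fun j => by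
        rw [hq]; exact h1 j (p n j) ⟨hx j, ih j⟩
  intro k i
  rw [hq]
  exact h1 i (p k i) ⟨hx i, key k i⟩
end

section
/- Let T be a type of system behaviors, let Σ ⊆ T and Ae ⊆ T be sets of behaviors, let P and Q be parameter types, let Af : P → Set T and G : Q → Set T be parameterized families of behavior sets, let λ : P → Q and Γ : Q → P. Assume: (1) for every p ∈ P, Σ ∩ Ae ∩ Af(p) ⊆ G(λ(p)); (2) for every q ∈ Q, G(q) ⊆ Af(Γ(q)). Let x ∈ Σ ∩ Ae and suppose x ∈ Af(p₀) for some p₀ ∈ P. Define recursively p[0] = p₀, q[k] = λ(p[k]), p[k+1] = Γ(q[k]). Then for every k ∈ ℕ, x ∈ G(q[k]); that is, x satisfies the infinite conjunction of guarantees ⋂ₖ G(q[k]). -/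
/-- Theorem 1 (assume-guarantee reasoning), flattened single-contract form. -/
theorem assume_guarantee_single
    {T : Type*} (Sys Ae : Set T)
    {P Q : Type*}
    (Af : P → Set T) (G : Q → Set T)
    (lam : P → Q) (Γ : Q → P)
    (h1 : ∀ p : P, Sys ∩ Ae ∩ Af p ⊆ G (lam p))
    (h2 : ∀ q : Q, G q ⊆ Af (Γ q))
    (x : T) (hx : x ∈ Sys ∩ Ae)
    (p0 : P) (hp0 : x ∈ Af p0)
    (p : ℕ → P) (q : ℕ → Q)
    (hpzero : p 0 = p0)
    (hq : ∀ k, q k = lam (p k))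
    (hpsucc : ∀ k, p (k + 1) = Γ (q k)) :
    x ∈ ⋂ k : ℕ, G (q k) := by
  have key : ∀ k, x ∈ Af (p k) ∧ x ∈ G (q k) := by
    intro k
    induction k with
    | zero =>
      have hA : x ∈ Af (p 0) := by rw [hpzero]; exact hp0
      exact ⟨hA, by rw [hq]; exact h1 _ ⟨hx, hA⟩⟩
    | succ n ih =>
      have hA : x ∈ Af (p (n + 1)) := by rw [hpsucc]; exact h2 _ ih.2
      exact ⟨hA, by rw [hq]; exact h1 _ ⟨hx, hA⟩⟩
  exact Set.mem_iInter.2 fun k => (key k).2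
end

section
/- Consider a network of discrete-time subsystems indexed by a finite set ι. For each i ∈ ι let Xᵢ be the state space, Uᵢ and Dᵢ types of inputs and disturbances with admissible sets 𝒰ᵢ ⊆ Uᵢ and 𝒟ᵢ ⊆ Dᵢ, let fᵢ : Xᵢ → (ι → ℝ) → Uᵢ → Dᵢ → Xᵢ be the dynamics (the second argument is the vector of scalar outputs of all subsystems), hᵢ : Xᵢ → ℝ the output map, and kᵢ : Xᵢ → (ι → ℝ) → Dᵢ → Uᵢ a feedback controller with kᵢ(x, y, d) ∈ 𝒰ᵢ always. Let Sᵢ ⊆ Xᵢ be sets and y^max : ι → ℝ be output bounds such that for every i: (a) for all xᵢ ∈ Sᵢ, all dᵢ ∈ 𝒟ᵢ, and all y : ι → ℝ with |y(j)| ≤ y^max(j) for all j, one has fᵢ(xᵢ, y, kᵢ(xᵢ, y, dᵢ), dᵢ) ∈ Sᵢ; and (b) for all xᵢ ∈ Sᵢ, |hᵢ(xᵢ)| ≤ y^max(i). Then for any trajectory x : ℕ → Π i, Xᵢ and disturbance signal d : ℕ → Π i, Dᵢ satisfying d(t)(i) ∈ 𝒟ᵢ for all t and i, the closed-loop dynamics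 x(t+1)(i) = fᵢ(x(t)(i), (fun j => hⱼ(x(t)(j))), kᵢ(x(t)(i), (fun j => hⱼ(x(t)(j))), d(t)(i)), d(t)(i)) for all t and i, and x(0)(i) ∈ Sᵢ for all i, it holds that x(t)(i) ∈ Sᵢ for every t ∈ ℕ and every i ∈ ι. -/
/-- Theorem 2 (set invariance of a network system with assume-guarantee contract):
the product of the sets `S i` is invariant along closed-loop trajectories. -/
theorem network_set_invariance
    {ι : Type*} [Fintype ι]
    (X U D : ι → Type*)
    (f : ∀ i, X i → (ι → ℝ) → U i → D i → X i)
    (h : ∀ i, X i → ℝ)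
    (k : ∀ i, X i → (ι → ℝ) → D i → U i)
    (𝒰 : ∀ i, Set (U i)) (𝒟 : ∀ i, Set (D i))
    (hk : ∀ i (xi : X i) (y : ι → ℝ) (di : D i), k i xi y di ∈ 𝒰 i)
    (S : ∀ i, Set (X i)) (ymax : ι → ℝ)
    (ha : ∀ i, ∀ xi ∈ S i, ∀ di ∈ 𝒟 i, ∀ y : ι → ℝ,
      (∀ j, |y j| ≤ ymax j) → f i xi y (k i xi y di) di ∈ S i)
    (hb : ∀ i, ∀ xi ∈ S i, |h i xi| ≤ ymax i)
    (x : ℕ → ∀ i, X i) (d : ℕ → ∀ i, D i)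
    (hd : ∀ t i, d t i ∈ 𝒟 i)
    (hdyn : ∀ t i, x (t + 1) i =
      f i (x t i) (fun j => h j (x t j))
        (k i (x t i) (fun j => h j (x t j)) (d t i)) (d t i))
    (hinit : ∀ i, x 0 i ∈ S i) :
    ∀ (t : ℕ) (i : ι), x t i ∈ S i := by
  intro t
  induction t with
  | zero => exact hinit
  | succ n ih =>
    intro i
    rw [hdyn n i]
    exact ha i _ (ih i) _ (hd n i) _ (fun j => hb j _ (ih j))
end

section
/- Consider a network of subsystems indexed by a finite set ι, with scalar output signals yᵢ : ℕ → ℝ for each i ∈ ι, and monotonically increasing gain functions λᵢ : (ι → ℝ) → ℝ (with respect to the pointwise order on ι → ℝ). Assume the time-stepped assume-guarantee contracts hold: for every i ∈ ι, every bound vector b : ι → ℝ with b ≥ 0 pointwise, and every T ∈ ℕ, if |yⱼ(t)| ≤ b(j) for all j ∈ ι and all t ≤ T, then |yᵢ(t)| ≤ λᵢ(b) for all t ≤ T + 1. Suppose there exists y⁰ : ι → ℝ with y⁰ ≥ 0 pointwise satisfying the validity condition λᵢ(y⁰) ≤ y⁰(i) for every i ∈ ι, and suppose |yᵢ(0)|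 ≤ y⁰(i) for every i. Then for every i ∈ ι and every t ∈ ℕ, |yᵢ(t)| ≤ λᵢ(y⁰); in particular |yᵢ(t)| ≤ y⁰(i) for all t. -/
/-- Lemma 1: output-bound invariance from a valid assume-guarantee contract,
in time-stepped form. -/
theorem output_bound_invariance
    {ι : Type*} [Fintype ι]
    (y : ι → ℕ → ℝ)
    (lam : ι → (ι → ℝ) → ℝ)
    (hmono : ∀ i, Monotone (lam i))
    (hcontract : ∀ (i : ι) (b : ι → ℝ), (∀ j, 0 ≤ b j) → ∀ T : ℕ,
      (∀ (j : ι) (t : ℕ), t ≤ T → |y j t| ≤ b j) →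
      ∀ t : ℕ, t ≤ T + 1 → |y i t| ≤ lam i b)
    (y0 : ι → ℝ) (hy0 : ∀ i, 0 ≤ y0 i)
    (hvalid : ∀ i, lam i y0 ≤ y0 i)
    (hinit : ∀ i, |y i 0| ≤ y0 i) :
    ∀ (i : ι) (t : ℕ), |y i t| ≤ lam i y0 ∧ |y i t| ≤ y0 i := by
  have key : ∀ T : ℕ, ∀ (j : ι) (t : ℕ), t ≤ T → |y j t| ≤ y0 j := by
    intro T
    induction T with
    | zero => intro j t ht; simpa [Nat.le_zero.mp ht] using hinit j
    | succ T ih =>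
      intro j t ht
      exact le_trans (hcontract j y0 hy0 T ih t ht) (hvalid j)
  intro i t
  have h := hcontract i y0 hy0 t (fun j s hs => key t j s hs) t (Nat.le_succ t)
  exact ⟨h, le_trans h (hvalid i)⟩
end

section
/- Let μ₁, μ₂, ν₁, ν₂, D₁, D₂ be nonnegative real numbers with μ₁·D₁ + μ₂·D₂ > 0. Then there exist real numbers a ≥ 0 and b ≥ 0 satisfying μ₁·D₁ + ν₁·b ≤ a and μ₂·D₂ + ν₂·a ≤ b if and only if ν₁·ν₂ < 1. -/
/-!
Substituting one gain inequality into the other gives `(1 - ν₁ν₂) a ≥ c₁ + ν₁ c₂` and, symmetrically,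
`(1 - ν₁ν₂) b ≥ c₂ + ν₂ c₁`, where `cᵢ = μᵢDᵢ`. Summing, `(1 - ν₁ν₂)(a + b) > 0` with `a + b ≥ 0`, so
`ν₁ν₂ < 1`. Conversely, if `ν₁ν₂ < 1` the two gain maps have a common fixed point, the solution of
the linear system `a = c₁ + ν₁ b`, `b = c₂ + ν₂ a`, and it is nonnegative.
-/

section FixedBound

variable {K : Type*} [Field K] {c₁ c₂ ν₁ ν₂ : K}

/-- The first coordinate of the common fixed point of `b ↦ c₁ + ν₁ b` and `a ↦ c₂ + ν₂ a`. -/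
def fixedBound (c₁ c₂ ν₁ ν₂ : K) : K := (c₁ + ν₁ * c₂) / (1 - ν₁ * ν₂)

theorem add_mul_fixedBound (h : ν₁ * ν₂ ≠ 1) :
    c₁ + ν₁ * fixedBound c₂ c₁ ν₂ ν₁ = fixedBound c₁ c₂ ν₁ ν₂ := by
  have hne : 1 - ν₁ * ν₂ ≠ 0 := sub_ne_zero.mpr h.symm
  rw [fixedBound, fixedBound, mul_comm ν₂ ν₁]
  field_simp
  ring

end FixedBound

section SmallGain

variable {K : Type*} [Field K] [LinearOrder K] [IsStrictOrderedRing K] {c₁ c₂ ν₁ ν₂ a b : K}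

theorem add_mul_le_one_sub_mul_mul_of_le_of_le (hν₁ : 0 ≤ ν₁)
    (h₁ : c₁ + ν₁ * b ≤ a) (h₂ : c₂ + ν₂ * a ≤ b) :
    c₁ + ν₁ * c₂ ≤ (1 - ν₁ * ν₂) * a := by
  have := mul_le_mul_of_nonneg_left h₂ hν₁
  linarith

theorem mul_lt_one_of_add_mul_le (hc₁ : 0 ≤ c₁) (hc₂ : 0 ≤ c₂) (hc : 0 < c₁ + c₂)
    (hν₁ : 0 ≤ ν₁) (hν₂ : 0 ≤ ν₂) (ha : 0 ≤ a) (hb : 0 ≤ b)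
    (h₁ : c₁ + ν₁ * b ≤ a) (h₂ : c₂ + ν₂ * a ≤ b) :
    ν₁ * ν₂ < 1 := by
  have hA := add_mul_le_one_sub_mul_mul_of_le_of_le hν₁ h₁ h₂
  have hB := add_mul_le_one_sub_mul_mul_of_le_of_le hν₂ h₂ h₁
  have hsum : 0 < (1 - ν₁ * ν₂) * (a + b) := by
    rw [mul_comm ν₂ ν₁] at hB
    linarith [mul_nonneg hν₁ hc₂, mul_nonneg hν₂ hc₁]
  linarith [pos_of_mul_pos_left hsum (add_nonneg ha hb)]

theorem fixedBound_nonneg (hc₁ : 0 ≤ c₁) (hc₂ : 0 ≤ c₂) (hν₁ : 0 ≤ ν₁) (h : ν₁ * ν₂ < 1) :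
    0 ≤ fixedBound c₁ c₂ ν₁ ν₂ :=
  div_nonneg (by positivity) (sub_nonneg.mpr h.le)

end SmallGain

/-- Existence of a valid assume-guarantee contract for a two-subsystem
interconnection iff the small gain condition holds. -/
theorem valid_contract_iff_small_gain
    (μ₁ μ₂ ν₁ ν₂ D₁ D₂ : ℝ)
    (hμ₁ : 0 ≤ μ₁) (hμ₂ : 0 ≤ μ₂) (hν₁ : 0 ≤ ν₁) (hν₂ : 0 ≤ ν₂)
    (hD₁ : 0 ≤ D₁) (hD₂ : 0 ≤ D₂)
    (hpos : 0 < μ₁ * D₁ + μ₂ * D₂) :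
    (∃ a b : ℝ, 0 ≤ a ∧ 0 ≤ b ∧
      μ₁ * D₁ + ν₁ * b ≤ a ∧ μ₂ * D₂ + ν₂ * a ≤ b) ↔ ν₁ * ν₂ < 1 := by
  have hc₁ := mul_nonneg hμ₁ hD₁
  have hc₂ := mul_nonneg hμ₂ hD₂
  constructor
  · rintro ⟨a, b, ha, hb, h₁, h₂⟩
    exact mul_lt_one_of_add_mul_le hc₁ hc₂ hpos hν₁ hν₂ ha hb h₁ h₂
  · intro h
    have h' : ν₂ * ν₁ < 1 := by rwa [mul_comm]
    exact ⟨fixedBound _ _ ν₁ ν₂, fixedBound _ _ ν₂ ν₁,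
      fixedBound_nonneg hc₁ hc₂ hν₁ h, fixedBound_nonneg hc₂ hc₁ hν₂ h',
      (add_mul_fixedBound h.ne).le, (add_mul_fixedBound h'.ne).le⟩
end
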